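/- Let d ≥ 2 and γ ≥ 1. For Werner states on ℂ^d ⊗ ℂ^d: (i) sup_{p,q ∈ [0,1]} E_γ(ω^q‖ω^p) = 1 (so the identity mechanism on Werner states admits no nontrivial privacy guarantee against all measurements), while (ii) sup_{p,q ∈ [0,1]} E_γ^PPT(ω^q‖ω^p) = 2/(d+1) (so it is (ε, 2/(d+1))-private against PPT measurements, with δ vanishing as d → ∞). -/

import Mathlib

noncomputable section
open Matrix ComplexOrder

/-- Bipartite complex matrices on ℂ^d ⊗ ℂ^d. -/
abbrev BMat (d : ℕ) := Matrix (Fin d × Fin d) (Fin d × Fin d) ℂ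

/-- The swap operator `F = Σ_{i,j} |i⟩⟨j| ⊗ |j⟩⟨i|`. -/
def swapOp (d : ℕ) : BMat d :=
  fun p q => if p.1 = q.2 ∧ p.2 = q.1 then 1 else 0

/-- The symmetric Werner extreme state `Θ = (I + F)/(d(d+1))`. -/
def wΘ (d : ℕ) : BMat d := ((d : ℂ) * ((d : ℂ) + 1))⁻¹ • (1 + swapOp d)

/-- The antisymmetric Werner extreme state `Θ⊥ = (I − F)/(d(d−1))`. -/
def wΘperp (d : ℕ) : BMat d := ((d : ℂ) * ((d : ℂ) - 1))⁻¹ • (1 - swapOp d)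

/-- The Werner state `ω^p = pΘ + (1−p)Θ⊥`. -/
def werner (d : ℕ) (p : ℝ) : BMat d := (p : ℂ) • wΘ d + ((1 - p : ℝ) : ℂ) • wΘperp d

/-- The partial transpose on the second tensor factor:
`T_B(M)((a,b),(a',b')) := M((a,b'),(a',b))`. -/
def ptB {d : ℕ} (M : BMat d) : BMat d :=
  fun p q => M (p.1, q.2) (q.1, p.2)

/-- Hockey-stick divergence (all measurements) for γ ≥ 1. -/
def Eg {d : ℕ} (γ : ℝ) (ρ σ : BMat d) : ℝ :=
  sSup {x : ℝ | ∃ M : BMat d, M.PosSemidef ∧ ((1 : BMat d) - M).PosSemidef ∧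
    x = ((M * (ρ - (γ : ℂ) • σ)).trace).re}

/-- PPT-measured hockey-stick divergence for γ ≥ 1. -/
def EgPPT {d : ℕ} (γ : ℝ) (ρ σ : BMat d) : ℝ :=
  sSup {x : ℝ | ∃ M : BMat d, M.PosSemidef ∧ ((1 : BMat d) - M).PosSemidef ∧
    (ptB M).PosSemidef ∧ ((1 : BMat d) - ptB M).PosSemidef ∧
    x = ((M * (ρ - (γ : ℂ) • σ)).trace).re}

/-!
Since `ω^q - γ ω^p = (q - γp) Θ + (1 - q - γ(1 - p)) Θ⊥`, the payoff of an effect `M` is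
`a α + b β` with `α = Tr(MΘ)` and `β = Tr(MΘ⊥)` in `[0, 1]`, `a, b ≤ 1` and `a + b = 1 - γ ≤ 0`.
Over all effects the payoff is at most `Tr(M ω^q) ≤ 1`, attained by the symmetric projector
`(I + F)/2` at `q = 1`, `p = 0`. If `T_B(M)` is an effect too, then, as `T_B(F) = |Φ⟩⟨Φ|` for
`Φ = Σᵢ |ii⟩`, `Tr(MF) = ⟨Φ|T_B(M)|Φ⟩ ∈ [0, d]`; with `(d + 1) Θ - (d - 1) Θ⊥ = (2/d) F` this
gives `0 ≤ (d + 1) α - (d - 1) β ≤ 2`, hence `a α + b β ≤ |α - β| ≤ 2/(d + 1)`. The PPT effect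
`(I + F)/(d + 1)` attains this bound.
-/

namespace Matrix

variable {n 𝕜 : Type*} [Fintype n] [RCLike 𝕜]

theorem PosSemidef.of_mul_self_eq_smul {A : Matrix n n 𝕜} (hA : A.IsHermitian) {c : ℝ}
    (hc : 0 < c) (h : A * A = c • A) : A.PosSemidef := by
  have : A = c⁻¹ • (Aᴴ * A) := by
    rw [hA.eq, h, smul_smul, inv_mul_cancel₀ hc.ne', one_smul]
  rw [this]
  exact (posSemidef_conjTranspose_mul_self A).smul (inv_nonneg.mpr hc.le)

theorem vecMulVec_self_star_mul_self (a : n → 𝕜) :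
    vecMulVec a (star a) * vecMulVec a (star a) = (star a ⬝ᵥ a) • vecMulVec a (star a) := by
  rw [vecMulVec_mul_vecMulVec, vecMulVec_smul]

variable [DecidableEq n]

theorem PosSemidef.smul_one_sub_of_mul_self_eq_smul {A : Matrix n n 𝕜} (hA : A.IsHermitian)
    {c : ℝ} (hc : 0 < c) (h : A * A = c • A) : (c • 1 - A).PosSemidef := by
  refine of_mul_self_eq_smul ((isHermitian_one.smul (.all c)).sub hA) hc ?_
  simp only [sub_mul, mul_sub, h, smul_mul_assoc, mul_smul_comm, one_mul, mul_one, smul_sub,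
    smul_smul]
  abel

open scoped MatrixOrder in
theorem PosSemidef.trace_mul_nonneg {A B : Matrix n n 𝕜} (hA : A.PosSemidef)
    (hB : B.PosSemidef) : 0 ≤ (A * B).trace := by
  have hB' : 0 ≤ B := nonneg_iff_posSemidef.mpr hB
  have hsqrt := nonneg_iff_posSemidef.mp (CFC.sqrt_nonneg B)
  rw [← CFC.sqrt_mul_sqrt_self B hB', ← mul_assoc, trace_mul_cycle]
  nth_rw 1 [← hsqrt.1]
  exact (hA.conjTranspose_mul_mul_same _).trace_nonneg

theorem trace_mul_le_trace {A B : Matrix n n 𝕜} (hA : (1 - A).PosSemidef)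
    (hB : B.PosSemidef) : (A * B).trace ≤ B.trace := by
  have := hA.trace_mul_nonneg hB
  rwa [sub_mul, one_mul, trace_sub, sub_nonneg] at this

end Matrix

theorem re_trace_mul_sub_smul_le_one {n : Type*} [Fintype n] [DecidableEq n]
    {M ρ σ : Matrix n n ℂ} (hM : M.PosSemidef) (hM1 : (1 - M).PosSemidef) (hρ : ρ.PosSemidef)
    (hρ1 : ρ.trace = 1) (hσ : σ.PosSemidef) {γ : ℝ} (hγ : 0 ≤ γ) :
    (M * (ρ - (γ : ℂ) • σ)).trace.re ≤ 1 := by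
  have hMρ := (Complex.le_def.mp (trace_mul_le_trace hM1 hρ)).1
  have hMσ := (Complex.le_def.mp (hM.trace_mul_nonneg hσ)).1
  rw [hρ1, Complex.one_re] at hMρ
  rw [Complex.zero_re] at hMσ
  rw [mul_sub, trace_sub, mul_smul_comm, trace_smul, Complex.sub_re, smul_eq_mul,
    Complex.re_ofReal_mul]
  nlinarith [mul_nonneg hγ hMσ]

theorem mul_add_mul_le_abs_sub {a b x y : ℝ} (ha : a ≤ 1) (hb : b ≤ 1) (hab : a + b ≤ 0)
    (hx : 0 ≤ x) (hy : 0 ≤ y) : a * x + b * y ≤ |x - y| := by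
  rcases le_total y x with h | h
  · rw [abs_of_nonneg (sub_nonneg.mpr h)]
    nlinarith
  · rw [abs_of_nonpos (sub_nonpos.mpr h)]
    nlinarith

theorem abs_sub_le_two_div_add_one {D x y : ℝ} (hD : 0 < D + 1) (hy0 : 0 ≤ y) (hy1 : y ≤ 1)
    (h0 : 0 ≤ (D + 1) * x - (D - 1) * y) (h2 : (D + 1) * x - (D - 1) * y ≤ 2) :
    |x - y| ≤ 2 / (D + 1) := by
  rw [le_div_iff₀ hD, abs_sub_comm]
  rcases le_total x y with h | h
  · rw [abs_of_nonneg (sub_nonneg.mpr h)]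
    nlinarith
  · rw [abs_of_nonpos (sub_nonpos.mpr h)]
    nlinarith

section Swap

variable {d : ℕ}

theorem swapOp_eq_toMatrix :
    swapOp d = (Equiv.prodComm (Fin d) (Fin d)).toPEquiv.toMatrix := by
  ext p q
  rw [PEquiv.toMatrix_apply]
  simp only [swapOp, Equiv.toPEquiv_apply, Option.mem_def, Option.some.injEq,
    Equiv.prodComm_apply]
  grind

theorem swapOp_mul_swapOp : swapOp d * swapOp d = 1 := by
  rw [swapOp_eq_toMatrix, ← PEquiv.toMatrix_trans, ← Equiv.toPEquiv_trans]
  nth_rw 1 [← Equiv.prodComm_symm]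
  rw [Equiv.symm_trans_self, Equiv.toPEquiv_refl, PEquiv.toMatrix_refl]

theorem isHermitian_swapOp : (swapOp d).IsHermitian := by
  unfold IsHermitian
  ext p q
  simp only [conjTranspose_apply, swapOp, apply_ite star, star_one, star_zero]
  exact if_congr (by grind) rfl rfl

theorem trace_swapOp : (swapOp d).trace = d := by
  have h (a b : Fin d) : (a = b ∧ b = a) ↔ a = b := ⟨And.left, fun h => ⟨h, h.symm⟩⟩
  rw [trace, Fintype.sum_prod_type]
  simp [swapOp, h]

end Swap

section PartialTranspose

variable {d : ℕ}

@[simp] theorem ptB_zero : ptB (0 : BMat d) = 0 := rfl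

@[simp] theorem ptB_add (M N : BMat d) : ptB (M + N) = ptB M + ptB N := rfl

@[simp] theorem ptB_smul (c : ℝ) (M : BMat d) : ptB (c • M) = c • ptB M := rfl

@[simp] theorem ptB_one : ptB (1 : BMat d) = 1 := by
  ext p q
  simp only [ptB, one_apply, Prod.ext_iff]
  grind

theorem trace_ptB (M : BMat d) : (ptB M).trace = M.trace := rfl

theorem trace_ptB_mul_ptB (M N : BMat d) : (ptB M * ptB N).trace = (M * N).trace := by
  simp only [trace, diag_apply, mul_apply, ptB, Fintype.sum_prod_type]
  refine Finset.sum_congr rfl fun a _ => ?_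
  rw [Finset.sum_congr rfl fun _ _ => Finset.sum_comm, Finset.sum_comm]
  exact Finset.sum_congr rfl fun _ _ => Finset.sum_comm

def maxEntVec (d : ℕ) : Fin d × Fin d → ℂ := fun p => if p.1 = p.2 then 1 else 0

theorem star_maxEntVec : star (maxEntVec d) = maxEntVec d := by
  ext p
  by_cases h : p.1 = p.2 <;> simp [maxEntVec, h]

theorem star_maxEntVec_dotProduct_maxEntVec : star (maxEntVec d) ⬝ᵥ maxEntVec d = d := by
  simp [dotProduct, maxEntVec, Fintype.sum_prod_type]

theorem ptB_swapOp : ptB (swapOp d) = vecMulVec (maxEntVec d) (star (maxEntVec d)) := by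
  ext p q
  rw [star_maxEntVec]
  simp only [ptB, swapOp, vecMulVec_apply, maxEntVec]
  by_cases h1 : p.1 = p.2 <;> by_cases h2 : q.1 = q.2 <;> simp [h1, h2, eq_comm]

theorem vecMulVec_maxEntVec_mul_self :
    vecMulVec (maxEntVec d) (star (maxEntVec d)) * vecMulVec (maxEntVec d) (star (maxEntVec d))
      = (d : ℝ) • vecMulVec (maxEntVec d) (star (maxEntVec d)) := by
  rw [vecMulVec_self_star_mul_self, star_maxEntVec_dotProduct_maxEntVec, ← Complex.ofReal_natCast,
    Complex.coe_smul]

theorem posSemidef_natCast_smul_one_sub_vecMulVec_maxEntVec (hd : 0 < d) :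
    ((d : ℝ) • 1 - vecMulVec (maxEntVec d) (star (maxEntVec d))).PosSemidef :=
  .smul_one_sub_of_mul_self_eq_smul (posSemidef_vecMulVec_self_star _).isHermitian
    (by exact_mod_cast hd) vecMulVec_maxEntVec_mul_self

theorem re_trace_mul_swapOp_mem_Icc {M : BMat d} (hpt : (ptB M).PosSemidef)
    (hpt1 : (1 - ptB M).PosSemidef) : (M * swapOp d).trace.re ∈ Set.Icc 0 (d : ℝ) := by
  have hG := posSemidef_vecMulVec_self_star (maxEntVec d)
  rw [← trace_ptB_mul_ptB, ptB_swapOp]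
  refine ⟨(Complex.le_def.mp (hpt.trace_mul_nonneg hG)).1, ?_⟩
  have hGtr : (vecMulVec (maxEntVec d) (star (maxEntVec d))).trace = d := by
    rw [← ptB_swapOp, trace_ptB, trace_swapOp]
  simpa [hGtr] using (Complex.le_def.mp (trace_mul_le_trace hpt1 hG)).1

end PartialTranspose

section Werner

variable {d : ℕ}

theorem one_add_swapOp_mul_self :
    (1 + swapOp d) * (1 + swapOp d) = (2 : ℝ) • (1 + swapOp d) := by
  rw [add_mul, mul_add, mul_add, swapOp_mul_swapOp, two_smul]
  simp only [one_mul, mul_one]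
  abel

theorem one_sub_swapOp_mul_self :
    (1 - swapOp d) * (1 - swapOp d) = (2 : ℝ) • (1 - swapOp d) := by
  rw [sub_mul, mul_sub, mul_sub, swapOp_mul_swapOp, two_smul]
  simp only [one_mul, mul_one]
  abel

theorem one_add_swapOp_mul_one_sub_swapOp : (1 + swapOp d) * (1 - swapOp d) = 0 := by
  rw [add_mul, mul_sub, mul_sub, swapOp_mul_swapOp]
  simp only [one_mul, mul_one]
  abel

theorem posSemidef_one_add_swapOp : (1 + swapOp d).PosSemidef :=
  .of_mul_self_eq_smul (isHermitian_one.add isHermitian_swapOp) two_pos one_add_swapOp_mul_self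

theorem posSemidef_one_sub_swapOp : (1 - swapOp d).PosSemidef :=
  .of_mul_self_eq_smul (isHermitian_one.sub isHermitian_swapOp) two_pos one_sub_swapOp_mul_self

theorem posSemidef_one_sub_smul_one_add_swapOp {c : ℝ} (hc0 : 0 ≤ c) (hc : 2 * c ≤ 1) :
    (1 - c • (1 + swapOp d)).PosSemidef := by
  rw [show (1 : BMat d) - c • (1 + swapOp d) = (1 - 2 * c) • 1 + c • (1 - swapOp d) by module]
  exact (PosSemidef.one.smul (by linarith)).add (posSemidef_one_sub_swapOp.smul hc0)

theorem posSemidef_ptB_smul_one_add_swapOp {c : ℝ} (hc0 : 0 ≤ c) :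
    (ptB (c • (1 + swapOp d))).PosSemidef := by
  rw [ptB_smul, ptB_add, ptB_one, ptB_swapOp]
  exact (PosSemidef.one.add (posSemidef_vecMulVec_self_star _)).smul hc0

theorem posSemidef_one_sub_ptB_smul_one_add_swapOp (hd : 0 < d) {c : ℝ} (hc0 : 0 ≤ c)
    (hc : c * (d + 1) ≤ 1) : (1 - ptB (c • (1 + swapOp d))).PosSemidef := by
  set G := vecMulVec (maxEntVec d) (star (maxEntVec d))
  rw [ptB_smul, ptB_add, ptB_one, ptB_swapOp,
    show (1 : BMat d) - c • (1 + G) = (1 - c * (d + 1)) • 1 + c • ((d : ℝ) • 1 - G) by module]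
  exact (PosSemidef.one.smul (by linarith)).add
    ((posSemidef_natCast_smul_one_sub_vecMulVec_maxEntVec hd).smul hc0)

theorem wΘ_eq_real_smul : wΘ d = ((d : ℝ) * ((d : ℝ) + 1))⁻¹ • (1 + swapOp d) := by
  rw [wΘ, ← Complex.coe_smul]
  push_cast
  rfl

theorem wΘperp_eq_real_smul : wΘperp d = ((d : ℝ) * ((d : ℝ) - 1))⁻¹ • (1 - swapOp d) := by
  rw [wΘperp, ← Complex.coe_smul]
  push_cast
  rfl

theorem posSemidef_wΘ : (wΘ d).PosSemidef := by
  rw [wΘ_eq_real_smul]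
  exact posSemidef_one_add_swapOp.smul (by positivity)

theorem posSemidef_wΘperp : (wΘperp d).PosSemidef := by
  have hcoef : 0 ≤ (d : ℝ) * ((d : ℝ) - 1) := by
    rcases Nat.eq_zero_or_pos d with rfl | hd
    · simp
    · have : (1 : ℝ) ≤ d := by exact_mod_cast hd
      nlinarith
  rw [wΘperp_eq_real_smul]
  exact posSemidef_one_sub_swapOp.smul (inv_nonneg.mpr hcoef)

theorem trace_wΘ (hd : 1 ≤ d) : (wΘ d).trace = 1 := by
  have : (d : ℂ) ≠ 0 := by exact_mod_cast (by omega : d ≠ 0)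
  have : (d : ℂ) + 1 ≠ 0 := by exact_mod_cast (by omega : d + 1 ≠ 0)
  rw [wΘ, trace_smul, trace_add, trace_one, trace_swapOp, smul_eq_mul]
  simp only [Fintype.card_prod, Fintype.card_fin, Nat.cast_mul]
  field_simp

theorem trace_wΘperp (hd : 2 ≤ d) : (wΘperp d).trace = 1 := by
  have : (d : ℂ) ≠ 0 := by exact_mod_cast (by omega : d ≠ 0)
  have : (d : ℂ) - 1 ≠ 0 := by
    rw [sub_ne_zero]; exact_mod_cast (by omega : d ≠ 1)
  rw [wΘperp, trace_smul, trace_sub, trace_one, trace_swapOp, smul_eq_mul]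
  simp only [Fintype.card_prod, Fintype.card_fin, Nat.cast_mul]
  field_simp

theorem posSemidef_werner {p : ℝ} (hp : p ∈ Set.Icc (0 : ℝ) 1) :
    (werner d p).PosSemidef := by
  rw [werner, Complex.coe_smul, Complex.coe_smul]
  exact (posSemidef_wΘ.smul hp.1).add (posSemidef_wΘperp.smul (sub_nonneg.mpr hp.2))

theorem trace_werner (hd : 2 ≤ d) (p : ℝ) : (werner d p).trace = 1 := by
  simp [werner, trace_wΘ (by omega : 1 ≤ d), trace_wΘperp hd]

theorem werner_sub_smul_werner (γ p q : ℝ) :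
    werner d q - (γ : ℂ) • werner d p
      = ((q - γ * p : ℝ) : ℂ) • wΘ d + ((1 - q - γ * (1 - p) : ℝ) : ℂ) • wΘperp d := by
  simp only [werner]
  push_cast
  module

theorem re_trace_mul_werner_sub_smul_werner (M : BMat d) (γ p q : ℝ) :
    (M * (werner d q - (γ : ℂ) • werner d p)).trace.re
      = (q - γ * p) * (M * wΘ d).trace.re
        + (1 - q - γ * (1 - p)) * (M * wΘperp d).trace.re := by
  rw [werner_sub_smul_werner, mul_add, trace_add, mul_smul_comm, mul_smul_comm, trace_smul,
    trace_smul, Complex.add_re, smul_eq_mul, smul_eq_mul, Complex.re_ofReal_mul,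
    Complex.re_ofReal_mul]

theorem one_add_swapOp_mul_wΘ : (1 + swapOp d) * wΘ d = (2 : ℝ) • wΘ d := by
  rw [wΘ, mul_smul_comm, one_add_swapOp_mul_self, smul_comm]

theorem one_add_swapOp_mul_wΘperp : (1 + swapOp d) * wΘperp d = 0 := by
  rw [wΘperp, mul_smul_comm, one_add_swapOp_mul_one_sub_swapOp, smul_zero]

theorem re_trace_smul_one_add_swapOp_mul_werner_one_sub (hd : 1 ≤ d) (c γ : ℝ) :
    ((c • (1 + swapOp d)) * (werner d 1 - (γ : ℂ) • werner d 0)).trace.re = 2 * c := by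
  rw [re_trace_mul_werner_sub_smul_werner, smul_mul_assoc, smul_mul_assoc,
    one_add_swapOp_mul_wΘ, one_add_swapOp_mul_wΘperp, smul_smul, trace_smul, trace_wΘ hd]
  simp [mul_comm]

theorem add_one_smul_wΘ_sub_sub_one_smul_wΘperp (hd : 2 ≤ d) :
    ((d : ℝ) + 1) • wΘ d - ((d : ℝ) - 1) • wΘperp d = (2 / d : ℝ) • swapOp d := by
  have h0 : (d : ℝ) ≠ 0 := by exact_mod_cast (by omega : d ≠ 0)
  have h1 : (d : ℝ) + 1 ≠ 0 := by positivity
  have h2 : (d : ℝ) - 1 ≠ 0 := by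
    rw [sub_ne_zero]; exact_mod_cast (by omega : d ≠ 1)
  rw [wΘ_eq_real_smul, wΘperp_eq_real_smul, smul_smul, smul_smul]
  match_scalars <;> field_simp <;> ring

theorem re_trace_mul_werner_sub_smul_werner_le_of_ppt (hd : 2 ≤ d) {γ p q : ℝ} (hγ : 1 ≤ γ)
    (hp : p ∈ Set.Icc (0 : ℝ) 1) (hq : q ∈ Set.Icc (0 : ℝ) 1) {M : BMat d}
    (hM : M.PosSemidef) (hM1 : (1 - M).PosSemidef) (hpt : (ptB M).PosSemidef)
    (hpt1 : (1 - ptB M).PosSemidef) :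
    (M * (werner d q - (γ : ℂ) • werner d p)).trace.re ≤ 2 / (d + 1) := by
  have hD : (2 : ℝ) ≤ d := by exact_mod_cast hd
  obtain ⟨hp0, hp1⟩ := hp
  obtain ⟨hq0, hq1⟩ := hq
  set α := (M * wΘ d).trace.re
  set β := (M * wΘperp d).trace.re
  have hα : 0 ≤ α := (Complex.le_def.mp (hM.trace_mul_nonneg posSemidef_wΘ)).1
  have hβ : 0 ≤ β := (Complex.le_def.mp (hM.trace_mul_nonneg posSemidef_wΘperp)).1
  have hβ1 : β ≤ 1 := by
    simpa [trace_wΘperp hd] using (Complex.le_def.mp (trace_mul_le_trace hM1 posSemidef_wΘperp)).1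
  have hrel : (d + 1) * α - (d - 1) * β = 2 / d * (M * swapOp d).trace.re := by
    have := congrArg (fun X => (M * X).trace.re) (add_one_smul_wΘ_sub_sub_one_smul_wΘperp hd)
    simpa only [mul_sub, trace_sub, mul_smul_comm, trace_smul, Complex.sub_re, Complex.smul_re,
      smul_eq_mul] using this
  obtain ⟨hf0, hfd⟩ := re_trace_mul_swapOp_mem_Icc hpt hpt1
  rw [re_trace_mul_werner_sub_smul_werner]
  calc _ ≤ |α - β| :=
        mul_add_mul_le_abs_sub (by nlinarith [mul_nonneg (by linarith : 0 ≤ γ) hp0])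
          (by nlinarith [mul_nonneg (by linarith : 0 ≤ γ) (sub_nonneg.mpr hp1)])
          (by linarith) hα hβ
    _ ≤ 2 / (d + 1) := by
        refine abs_sub_le_two_div_add_one (by linarith) hβ hβ1 (by rw [hrel]; positivity) ?_
        rw [hrel, div_mul_eq_mul_div, div_le_iff₀ (by linarith)]
        linarith

end Werner

section Divergences

variable {d : ℕ}

theorem Eg_le_one {γ : ℝ} (hγ : 0 ≤ γ) {ρ σ : BMat d} (hρ : ρ.PosSemidef)
    (hρ1 : ρ.trace = 1) (hσ : σ.PosSemidef) : Eg γ ρ σ ≤ 1 :=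
  csSup_le ⟨_, 0, .zero, by rw [sub_zero]; exact .one, rfl⟩
    fun _ ⟨_, hM, hM1, hx⟩ => hx ▸ re_trace_mul_sub_smul_le_one hM hM1 hρ hρ1 hσ hγ

theorem Eg_werner_one_zero (hd : 2 ≤ d) {γ : ℝ} (hγ : 0 ≤ γ) :
    Eg γ (werner d 1) (werner d 0) = 1 := by
  refine IsGreatest.csSup_eq ⟨⟨(1 / 2 : ℝ) • (1 + swapOp d),
    posSemidef_one_add_swapOp.smul (by norm_num),
    posSemidef_one_sub_smul_one_add_swapOp (by norm_num) (by norm_num), ?_⟩, ?_⟩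
  · rw [re_trace_smul_one_add_swapOp_mul_werner_one_sub (by omega)]
    norm_num
  · rintro _ ⟨M, hM, hM1, rfl⟩
    exact re_trace_mul_sub_smul_le_one hM hM1 (posSemidef_werner (by simp)) (trace_werner hd 1)
      (posSemidef_werner (by simp)) hγ

theorem EgPPT_werner_le (hd : 2 ≤ d) {γ p q : ℝ} (hγ : 1 ≤ γ) (hp : p ∈ Set.Icc (0 : ℝ) 1)
    (hq : q ∈ Set.Icc (0 : ℝ) 1) : EgPPT γ (werner d q) (werner d p) ≤ 2 / (d + 1) :=
  csSup_le ⟨_, 0, .zero, by rw [sub_zero]; exact .one, by rw [ptB_zero]; exact .zero,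
      by rw [ptB_zero, sub_zero]; exact .one, rfl⟩
    fun _ ⟨_, hM, hM1, hpt, hpt1, hx⟩ =>
      hx ▸ re_trace_mul_werner_sub_smul_werner_le_of_ppt hd hγ hp hq hM hM1 hpt hpt1

theorem EgPPT_werner_one_zero (hd : 2 ≤ d) {γ : ℝ} (hγ : 1 ≤ γ) :
    EgPPT γ (werner d 1) (werner d 0) = 2 / (d + 1) := by
  have hc0 : (0 : ℝ) ≤ 1 / (d + 1) := by positivity
  have hc : 1 / ((d : ℝ) + 1) * (d + 1) = 1 := div_mul_cancel₀ 1 (by positivity)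
  refine IsGreatest.csSup_eq ⟨⟨(1 / (d + 1) : ℝ) • (1 + swapOp d),
    posSemidef_one_add_swapOp.smul hc0, posSemidef_one_sub_smul_one_add_swapOp hc0 ?_,
    posSemidef_ptB_smul_one_add_swapOp hc0,
    posSemidef_one_sub_ptB_smul_one_add_swapOp (by omega) hc0 hc.le, ?_⟩, ?_⟩
  · have hD : (1 : ℝ) ≤ d := by exact_mod_cast (by omega : 1 ≤ d)
    nlinarith
  · rw [re_trace_smul_one_add_swapOp_mul_werner_one_sub (by omega)]
    ring
  · rintro _ ⟨M, hM, hM1, hpt, hpt1, rfl⟩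
    exact re_trace_mul_werner_sub_smul_werner_le_of_ppt hd hγ (by simp) (by simp) hM hM1 hpt hpt1

end Divergences

/-- QLDP for Werner states: over all measurements the optimal δ is 1 (no privacy),
while over PPT measurements the optimal δ is 2/(d+1). -/
theorem stmt_10 (d : ℕ) (hd : 2 ≤ d) (γ : ℝ) (hγ : 1 ≤ γ) :
    (sSup {x : ℝ | ∃ p ∈ Set.Icc (0 : ℝ) 1, ∃ q ∈ Set.Icc (0 : ℝ) 1,
        x = Eg γ (werner d q) (werner d p)} = 1) ∧
    (sSup {x : ℝ | ∃ p ∈ Set.Icc (0 : ℝ) 1, ∃ q ∈ Set.Icc (0 : ℝ) 1,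
        x = EgPPT γ (werner d q) (werner d p)} = 2 / (d + 1)) := by
  have h0 : (0 : ℝ) ∈ Set.Icc (0 : ℝ) 1 := by simp
  have h1 : (1 : ℝ) ∈ Set.Icc (0 : ℝ) 1 := by simp
  constructor
  · refine IsGreatest.csSup_eq ⟨⟨0, h0, 1, h1, (Eg_werner_one_zero hd (by linarith)).symm⟩, ?_⟩
    rintro _ ⟨p, hp, q, hq, rfl⟩
    exact Eg_le_one (by linarith) (posSemidef_werner hq) (trace_werner hd q)
      (posSemidef_werner hp)
  · refine IsGreatest.csSup_eq ⟨⟨0, h0, 1, h1, (EgPPT_werner_one_zero hd hγ).symm⟩, ?_⟩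
    rintro _ ⟨p, hp, q, hq, rfl⟩
    exact EgPPT_werner_le hd hγ hp hq
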